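/- arXiv:2411.02023 — 2 statements merged into one kernel-verified Lean document; each statement's English description precedes it below -/
import Mathlib

section
/- Let Φ: R → R be convex and non-increasing, U₁, U₀ random vectors in R^d, ρ ∈ [0,1], and Π a symmetric positive semidefinite d×d matrix. Then the performative risk PR(θ) = ρ E[Φ(U₁ᵀθ)] + (1−ρ) E[Φ(−(U₀ + Πθ)ᵀθ)] is convex in θ. -/
/-!
The loss `θ ↦ Φ (U₁ ⬝ᵥ θ)` is a convex function of a linear one. The class-0 margin
`(U₀ + Π θ) ⬝ᵥ θ` is a linear function plus the positive semidefinite quadratic form of `Π`,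
hence convex; its negation is concave, and a convex non-increasing `Φ` of a concave function is
convex. Convexity survives integration in `ω` and the nonnegative combination with weights
`ρ`, `1 - ρ`.
-/

open MeasureTheory ProbabilityTheory Matrix Set

theorem LinearMap.BilinForm.convexOn_apply_self {𝕜 E : Type*} [Field 𝕜] [LinearOrder 𝕜]
    [IsStrictOrderedRing 𝕜] [AddCommGroup E] [Module 𝕜 E] (B : LinearMap.BilinForm 𝕜 E)
    (hB : ∀ v, 0 ≤ B v v) : ConvexOn 𝕜 univ fun x => B x x := by
  refine ⟨convex_univ, fun x _ y _ a b ha hb hab => ?_⟩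
  obtain rfl : b = 1 - a := by linear_combination hab
  have key : a • B x x + (1 - a) • B y y - B (a • x + (1 - a) • y) (a • x + (1 - a) • y)
      = a * (1 - a) * B (x - y) (x - y) := by
    simp only [map_add, map_sub, map_smul, LinearMap.add_apply, LinearMap.sub_apply,
      LinearMap.smul_apply, smul_eq_mul]
    ring
  nlinarith [mul_nonneg (mul_nonneg ha hb) (hB (x - y))]

theorem Matrix.PosSemidef.convexOn_mulVec_dotProduct_self {n : Type*} [Fintype n]
    {P : Matrix n n ℝ} (hP : P.PosSemidef) : ConvexOn ℝ univ fun x => P *ᵥ x ⬝ᵥ x := by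
  have := LinearMap.BilinForm.convexOn_apply_self ((dotProductBilin ℝ ℝ).compl₂ P.mulVecLin)
    fun v => by simpa using hP.dotProduct_mulVec_nonneg v
  simpa only [LinearMap.compl₂_apply, mulVecBilin_apply, dotProductBilin_apply_apply,
    dotProduct_comm] using this

theorem ConvexOn.comp_concaveOn_univ {𝕜 E β γ : Type*} [Field 𝕜] [LinearOrder 𝕜]
    [IsStrictOrderedRing 𝕜] [AddCommGroup E] [Module 𝕜 E] [AddCommMonoid β] [PartialOrder β]
    [Module 𝕜 β] [AddCommMonoid γ] [PartialOrder γ] [Module 𝕜 γ]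
    {s : Set E} {f : E → β} {g : β → γ}
    (hg : ConvexOn 𝕜 univ g) (hf : ConcaveOn 𝕜 s f) (hg' : Antitone g) :
    ConvexOn 𝕜 s (g ∘ f) :=
  ⟨hf.1, fun _ hx _ hy _ _ ha hb hab =>
    (hg' (hf.2 hx hy ha hb hab)).trans (hg.2 trivial trivial ha hb hab)⟩

theorem convexOn_integral {α E : Type*} [MeasurableSpace α] {μ : Measure α}
    [AddCommGroup E] [Module ℝ E] {s : Set E} (hs : Convex ℝ s) {f : E → α → ℝ}
    (hf : ∀ ω, ConvexOn ℝ s fun x => f x ω) (hint : ∀ x ∈ s, Integrable (f x) μ) :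
    ConvexOn ℝ s fun x => ∫ ω, f x ω ∂μ := by
  refine ⟨hs, fun x hx y hy a b ha hb hab => ?_⟩
  have hx' : Integrable (fun ω => a • f x ω) μ := (hint x hx).smul a
  have hy' : Integrable (fun ω => b • f y ω) μ := (hint y hy).smul b
  calc ∫ ω, f (a • x + b • y) ω ∂μ ≤ ∫ ω, a • f x ω + b • f y ω ∂μ :=
        integral_mono (hint _ (hs hx hy ha hb hab)) (hx'.add hy') fun ω =>
          (hf ω).2 hx hy ha hb hab
    _ = a • ∫ ω, f x ω ∂μ + b • ∫ ω, f y ω ∂μ := by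
        rw [integral_add hx' hy', integral_smul, integral_smul]

theorem classification_performative_risk_convex_general
    {Ω : Type*} [MeasureSpace Ω]
    {d : ℕ} (Φ : ℝ → ℝ) (hΦconv : ConvexOn ℝ univ Φ) (hΦmono : Antitone Φ)
    (U1 U0 : Ω → (Fin d → ℝ)) (ρ : ℝ) (hρ : ρ ∈ Icc (0 : ℝ) 1)
    (P : Matrix (Fin d) (Fin d) ℝ) (hP : P.PosSemidef)
    (hint1 : ∀ θ : Fin d → ℝ, Integrable (fun ω => Φ (U1 ω ⬝ᵥ θ)))
    (hint0 : ∀ θ : Fin d → ℝ,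
      Integrable (fun ω => Φ (-((U0 ω + P.mulVec θ) ⬝ᵥ θ)))) :
    ConvexOn ℝ univ (fun θ : Fin d → ℝ =>
      ρ * (∫ ω, Φ (U1 ω ⬝ᵥ θ))
        + (1 - ρ) * (∫ ω, Φ (-((U0 ω + P.mulVec θ) ⬝ᵥ θ)))) := by
  have hloss1 : ∀ ω, ConvexOn ℝ univ fun θ => Φ (U1 ω ⬝ᵥ θ) := fun ω =>
    hΦconv.comp_linearMap (dotProductBilin ℝ ℝ (U1 ω))
  have hmargin0 : ∀ ω, ConvexOn ℝ univ fun θ => (U0 ω + P *ᵥ θ) ⬝ᵥ θ := fun ω => by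
    simp only [add_dotProduct]
    exact ((dotProductBilin ℝ ℝ (U0 ω)).convexOn convex_univ).add
      hP.convexOn_mulVec_dotProduct_self
  have hloss0 : ∀ ω, ConvexOn ℝ univ fun θ => Φ (-((U0 ω + P *ᵥ θ) ⬝ᵥ θ)) := fun ω =>
    hΦconv.comp_concaveOn_univ (hmargin0 ω).neg hΦmono
  exact ((convexOn_integral convex_univ hloss1 fun θ _ => hint1 θ).smul hρ.1).add
    ((convexOn_integral convex_univ hloss0 fun θ _ => hint0 θ).smul (sub_nonneg.2 hρ.2))

/-- Convexity of the classification performative risk: for `Φ` convex and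
non-increasing, `ρ ∈ [0,1]` and `Π` symmetric positive semidefinite, the performative
risk `PR(θ) = ρ E[Φ(U₁ᵀθ)] + (1-ρ) E[Φ(-(U₀ + Πθ)ᵀθ)]` is convex in `θ`. -/
theorem classification_performative_risk_convex
    {Ω : Type*} [MeasureSpace Ω] [IsProbabilityMeasure (ℙ : Measure Ω)]
    {d : ℕ} (Φ : ℝ → ℝ) (hΦconv : ConvexOn ℝ univ Φ) (hΦmono : Antitone Φ)
    (U1 U0 : Ω → (Fin d → ℝ)) (ρ : ℝ) (hρ : ρ ∈ Icc (0 : ℝ) 1)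
    (P : Matrix (Fin d) (Fin d) ℝ) (hP : P.PosSemidef)
    (hint1 : ∀ θ : Fin d → ℝ, Integrable (fun ω => Φ (U1 ω ⬝ᵥ θ)))
    (hint0 : ∀ θ : Fin d → ℝ,
      Integrable (fun ω => Φ (-((U0 ω + P.mulVec θ) ⬝ᵥ θ)))) :
    ConvexOn ℝ univ (fun θ : Fin d → ℝ =>
      ρ * (∫ ω, Φ (U1 ω ⬝ᵥ θ))
        + (1 - ρ) * (∫ ω, Φ (-((U0 ω + P.mulVec θ) ⬝ᵥ θ)))) :=
  classification_performative_risk_convex_general Φ hΦconv hΦmono U1 U0 ρ hρ P hP hint1 hint0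
end

section
/- Under the assumptions of the variational formulation theorem (Φ convex non-increasing, Π symmetric positive definite, linear classifier, linear shift on class 0), the performative risk satisfies PR(θ) = ρ E[Φ(U₁ᵀθ)] + (1−ρ) E[max_{‖ΔU₀‖_{Π⁻¹} ≤ ‖θ‖_Π} Φ(−(U₀+ΔU₀)ᵀθ)]. -/
/-!
Since `Φ` is non-increasing, the inner maximum of `Φ(-(u + Δ)ᵀθ)` over the ball
`ΔᵀΠ⁻¹Δ ≤ θᵀΠθ` is the value at a maximiser of `Δᵀθ`. Writing `Δᵀθ = ΔᵀΠ⁻¹(Πθ)` and expanding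
`0 ≤ (Δ - Πθ)ᵀΠ⁻¹(Δ - Πθ)` gives `2Δᵀθ ≤ ΔᵀΠ⁻¹Δ + θᵀΠθ ≤ 2θᵀΠθ`, with equality at `Δ = Πθ`.
So for every realisation of `U₀` the supremum is attained at the linear shift `Πθ`, and the two
integrands coincide pointwise.
-/

open MeasureTheory ProbabilityTheory Matrix Set

namespace Matrix

variable {n : Type*} [Fintype n]

lemma IsSymm.dotProduct_mulVec_comm {M : Matrix n n ℝ} (hM : M.IsSymm) (x y : n → ℝ) :
    x ⬝ᵥ M *ᵥ y = y ⬝ᵥ M *ᵥ x := by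
  rw [dotProduct_mulVec, ← mulVec_transpose, hM.eq, dotProduct_comm]

lemma PosSemidef.two_mul_dotProduct_mulVec_le {M : Matrix n n ℝ} (hM : M.PosSemidef)
    (x y : n → ℝ) :
    2 * (x ⬝ᵥ M *ᵥ y) ≤ x ⬝ᵥ M *ᵥ x + y ⬝ᵥ M *ᵥ y := by
  have hsymm : y ⬝ᵥ M *ᵥ x = x ⬝ᵥ M *ᵥ y :=
    (isHermitian_iff_isSymm.mp hM.isHermitian).dotProduct_mulVec_comm y x
  have hnonneg : 0 ≤ (x - y) ⬝ᵥ M *ᵥ (x - y) := by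
    simpa using hM.dotProduct_mulVec_nonneg (x - y)
  simp only [mulVec_sub, sub_dotProduct, dotProduct_sub, hsymm] at hnonneg
  linarith

variable [DecidableEq n]

lemma PosDef.inv_mulVec_mulVec {P : Matrix n n ℝ} (hP : P.PosDef) (θ : n → ℝ) :
    P⁻¹ *ᵥ P *ᵥ θ = θ := by
  rw [mulVec_mulVec, nonsing_inv_mul P (isUnit_iff_ne_zero.mpr hP.det_pos.ne'), one_mulVec]

lemma PosDef.dotProduct_le_of_dotProduct_inv_mulVec_le {P : Matrix n n ℝ} (hP : P.PosDef)
    {Δ θ : n → ℝ} (hΔ : Δ ⬝ᵥ P⁻¹ *ᵥ Δ ≤ θ ⬝ᵥ P *ᵥ θ) :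
    Δ ⬝ᵥ θ ≤ θ ⬝ᵥ P *ᵥ θ := by
  have h := hP.inv.posSemidef.two_mul_dotProduct_mulVec_le Δ (P *ᵥ θ)
  rw [hP.inv_mulVec_mulVec, dotProduct_comm (P *ᵥ θ)] at h
  linarith

end Matrix

lemma isGreatest_antitone_perturbed_margin {n : Type*} [Fintype n] [DecidableEq n]
    {Φ : ℝ → ℝ} (hΦ : Antitone Φ) {P : Matrix n n ℝ} (hP : P.PosDef) (u θ : n → ℝ) :
    IsGreatest {x : ℝ | ∃ Δ : n → ℝ,
        Real.sqrt (Δ ⬝ᵥ P⁻¹.mulVec Δ) ≤ Real.sqrt (θ ⬝ᵥ P.mulVec θ) ∧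
          x = Φ (-((u + Δ) ⬝ᵥ θ))} (Φ (-((u + P.mulVec θ) ⬝ᵥ θ))) := by
  refine ⟨⟨P *ᵥ θ, ?_, rfl⟩, ?_⟩
  · rw [hP.inv_mulVec_mulVec, dotProduct_comm]
  · rintro x ⟨Δ, hΔ, rfl⟩
    have hθ : 0 ≤ θ ⬝ᵥ P *ᵥ θ := by simpa using hP.posSemidef.dotProduct_mulVec_nonneg θ
    have hle := hP.dotProduct_le_of_dotProduct_inv_mulVec_le ((Real.sqrt_le_sqrt_iff hθ).mp hΔ)
    apply hΦ
    simp only [add_dotProduct, neg_add, neg_le_neg_iff, add_le_add_iff_left,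
      dotProduct_comm (P *ᵥ θ)]
    exact hle

theorem performative_risk_variational_form_general
    {Ω : Type*} [MeasureSpace Ω]
    {d : ℕ} (Φ : ℝ → ℝ) (hΦmono : Antitone Φ)
    (ρ : ℝ)
    (P : Matrix (Fin d) (Fin d) ℝ) (hP : P.PosDef)
    (U1 U0 : Ω → (Fin d → ℝ)) (θ : Fin d → ℝ) :
    ρ * (∫ ω, Φ (U1 ω ⬝ᵥ θ))
        + (1 - ρ) * (∫ ω, Φ (-((U0 ω + P.mulVec θ) ⬝ᵥ θ))) =
      ρ * (∫ ω, Φ (U1 ω ⬝ᵥ θ))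
        + (1 - ρ) * (∫ ω, sSup {x : ℝ | ∃ Δ : Fin d → ℝ,
            Real.sqrt (Δ ⬝ᵥ P⁻¹.mulVec Δ) ≤ Real.sqrt (θ ⬝ᵥ P.mulVec θ) ∧
              x = Φ (-((U0 ω + Δ) ⬝ᵥ θ))}) := by
  congr 2
  exact integral_congr_ae <| .of_forall fun ω =>
    (isGreatest_antitone_perturbed_margin hΦmono hP (U0 ω) θ).csSup_eq.symm

/-- Variational (adversarial) formulation of the performative risk: for `Φ` convex
non-increasing and `Π` symmetric positive definite,
`PR(θ) = ρ E[Φ(U₁ᵀθ)] + (1-ρ) E[Φ(-(U₀+Πθ)ᵀθ)]` equals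
`ρ E[Φ(U₁ᵀθ)] + (1-ρ) E[ max_{‖ΔU₀‖_{Π⁻¹} ≤ ‖θ‖_Π} Φ(-(U₀+ΔU₀)ᵀθ) ]`. -/
theorem performative_risk_variational_form
    {Ω : Type*} [MeasureSpace Ω] [IsProbabilityMeasure (ℙ : Measure Ω)]
    {d : ℕ} (Φ : ℝ → ℝ) (hΦconv : ConvexOn ℝ univ Φ) (hΦmono : Antitone Φ)
    (ρ : ℝ) (hρ : ρ ∈ Icc (0 : ℝ) 1)
    (P : Matrix (Fin d) (Fin d) ℝ) (hP : P.PosDef)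
    (U1 U0 : Ω → (Fin d → ℝ)) (θ : Fin d → ℝ) :
    ρ * (∫ ω, Φ (U1 ω ⬝ᵥ θ))
        + (1 - ρ) * (∫ ω, Φ (-((U0 ω + P.mulVec θ) ⬝ᵥ θ))) =
      ρ * (∫ ω, Φ (U1 ω ⬝ᵥ θ))
        + (1 - ρ) * (∫ ω, sSup {x : ℝ | ∃ Δ : Fin d → ℝ,
            Real.sqrt (Δ ⬝ᵥ P⁻¹.mulVec Δ) ≤ Real.sqrt (θ ⬝ᵥ P.mulVec θ) ∧
              x = Φ (-((U0 ω + Δ) ⬝ᵥ θ))}) :=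
  performative_risk_variational_form_general Φ hΦmono ρ P hP U1 U0 θ
end
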